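/- For symmetric positive definite matrices X, Y and a symmetric positive definite matrix A, δ_T(X+A, Y+A) ≤ (α/(α+λ_min(A))) · δ_T(X,Y), where α = max{‖X‖₂, ‖Y‖₂} and λ_min(A) is the smallest eigenvalue of A. -/

import Mathlib

open Matrix Filter

variable {n : ℕ}

/-- Largest (real) eigenvalue: supremum of the real spectrum. -/
noncomputable def maxEig (M : Matrix (Fin n) (Fin n) ℝ) : ℝ := sSup (spectrum ℝ M)

/-- Smallest (real) eigenvalue: infimum of the real spectrum. -/
noncomputable def minEig (M : Matrix (Fin n) (Fin n) ℝ) : ℝ := sInf (spectrum ℝ M)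

/-- Thompson metric via the spectral formula
`δ_T(M,N) = max {log λ_max(M⁻¹N), log λ_max(N⁻¹M)}`. -/
noncomputable def deltaT (X Y : Matrix (Fin n) (Fin n) ℝ) : ℝ :=
  max (Real.log (maxEig (X⁻¹ * Y))) (Real.log (maxEig (Y⁻¹ * X)))

/-- Spectral (ℓ²-operator) norm of a matrix. -/
noncomputable def sNorm (M : Matrix (Fin n) (Fin n) ℝ) : ℝ :=
  ‖Matrix.toEuclideanCLM (𝕜 := ℝ) M‖

open Classical in
/-- The unique positive semidefinite square root (junk value `1` off PSD matrices). -/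
noncomputable def sqrtM (M : Matrix (Fin n) (Fin n) ℝ) : Matrix (Fin n) (Fin n) ℝ :=
  if h : M.PosSemidef then h.1.eigenvectorUnitary.1 * diagonal (Real.sqrt ∘ h.1.eigenvalues) *
    (star h.1.eigenvectorUnitary : Matrix (Fin n) (Fin n) ℝ) else 1

/-- Matrix logarithm via the continuous functional calculus. -/
noncomputable def mlog (M : Matrix (Fin n) (Fin n) ℝ) : Matrix (Fin n) (Fin n) ℝ :=
  cfc Real.log M

/-- Loewner order: `A ⪯ B` iff `B - A` is positive semidefinite. -/
def loewner (A B : Matrix (Fin n) (Fin n) ℝ) : Prop := (B - A).PosSemidef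

/-
For positive definite `M`, `λ_max(M⁻¹N)` is the least `μ` with `N ≤ μ • M` in the Loewner
order (conjugate by `M^{-1/2}`), so `δ_T(X, Y) ≤ t` iff `Y ≤ eᵗ X` and `X ≤ eᵗ Y`.
Put `c = α / (α + λ)` and `e = exp (-c t)`. From `e^{-t} X ≤ Y`, `X ≤ α` and `λ ≤ A`,
`Y + A - e (X + A) = (Y - e^{-t} X) + (e - e^{-t}) (α - X) + (1 - e) (A - λ) + r`
with the scalar `r = (1 - e) λ - (e - e^{-t}) α`, and `r ≥ 0` because convexity of `exp`
gives `e ≤ c e^{-t} + (1 - c)` while `c λ = (1 - c) α`.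
-/

open scoped MatrixOrder
open Real

theorem IsUnit.star_left_conjugate_le_conjugate_iff {R : Type*} [Ring R] [PartialOrder R]
    [StarRing R] [StarOrderedRing R] {u a b : R} (hu : IsUnit u) :
    star u * a * u ≤ star u * b * u ↔ a ≤ b := by
  rw [← sub_nonneg, ← sub_mul, ← mul_sub, hu.star_left_conjugate_nonneg_iff, sub_nonneg]

theorem exp_neg_mul_sub_mul_le {α l t : ℝ} (hα : 0 ≤ α) (hl : 0 ≤ l) (ht : 0 ≤ t) :
    (exp (-(α / (α + l) * t)) - exp (-t)) * α ≤ (1 - exp (-(α / (α + l) * t))) * l := by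
  rcases (add_nonneg hα hl).eq_or_lt with hsum | hsum
  · obtain ⟨rfl, rfl⟩ : α = 0 ∧ l = 0 := ⟨by linarith, by linarith⟩
    simp
  set c := α / (α + l)
  have hc0 : 0 ≤ c := by positivity
  have hc1 : c ≤ 1 := (div_le_one hsum).2 (by linarith)
  have hcl : c * l = (1 - c) * α := by
    simp only [c]; field_simp; ring
  have hconv : exp (-(c * t)) ≤ c * exp (-t) + (1 - c) := by
    simpa [smul_eq_mul, mul_neg] using
      convexOn_exp.2 (Set.mem_univ (-t)) (Set.mem_univ 0) hc0 (by linarith) (by ring)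
  have hf : exp (-t) ≤ 1 := exp_le_one_iff.2 (by linarith)
  nlinarith

namespace Matrix

variable {ι : Type*} [Fintype ι]

theorem trace_le_trace_of_le {A B : Matrix ι ι ℝ} (h : A ≤ B) : A.trace ≤ B.trace :=
  OrderHomClass.mono (tracePositiveLinearMap ι ℝ ℝ) h

theorem PosDef.pos_of_le_smul [Nonempty ι] {M N : Matrix ι ι ℝ} (hN : N.PosDef)
    (hM : M.PosSemidef) {μ : ℝ} (h : N ≤ μ • M) : 0 < μ := by
  have htr := trace_le_trace_of_le h
  rw [trace_smul, smul_eq_mul] at htr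
  exact pos_of_mul_pos_left (hN.trace_pos.trans_le htr) hM.trace_nonneg

variable [DecidableEq ι]

theorem PosDef.exists_isHermitian_spectrum_inv_mul_eq {M N : Matrix ι ι ℝ} (hM : M.PosDef)
    (hN : N.IsHermitian) :
    ∃ H : Matrix ι ι ℝ, H.IsHermitian ∧ spectrum ℝ (M⁻¹ * N) = spectrum ℝ H ∧
      ∀ μ : ℝ, N ≤ μ • M ↔ H ≤ algebraMap ℝ _ μ := by
  set R := CFC.sqrt M
  have hR : R.IsHermitian := (CFC.sqrt_nonneg M).isSelfAdjoint
  have hRu : IsUnit R := CFC.isUnit_sqrt_iff_isStrictlyPositive.mpr hM.isStrictlyPositive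
  have hRR : R * R = M := CFC.sqrt_mul_sqrt_self M
  have hRdet := (isUnit_iff_isUnit_det R).mp hRu
  have hinv : R⁻¹ * R = 1 := nonsing_inv_mul R hRdet
  have hinv' : R * R⁻¹ = 1 := mul_nonsing_inv R hRdet
  refine ⟨R⁻¹ * N * R⁻¹, ?_, ?_, fun μ => ?_⟩
  · simpa only [hR.inv.eq] using isHermitian_conjTranspose_mul_mul R⁻¹ hN
  · have : M⁻¹ * N =
        ((hRu.unit⁻¹ : (Matrix ι ι ℝ)ˣ) : Matrix ι ι ℝ) * (R⁻¹ * N * R⁻¹) * hRu.unit := by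
      rw [coe_units_inv, IsUnit.unit_spec, ← hRR, mul_inv_rev]
      simp only [Matrix.mul_assoc, hinv, Matrix.mul_one]
    rw [this, spectrum.units_conjugate']
  · have hN' : N = star R * (R⁻¹ * N * R⁻¹) * R := by
      rw [hR.star_eq]
      simp only [← Matrix.mul_assoc, hinv', Matrix.one_mul]
      rw [Matrix.mul_assoc, hinv, Matrix.mul_one]
    have hM' : μ • M = star R * algebraMap ℝ _ μ * R := by
      rw [hR.star_eq, Algebra.algebraMap_eq_smul_one, Matrix.mul_smul, Matrix.smul_mul,
        Matrix.mul_one, hRR]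
    rw [hM']
    nth_rw 1 [hN']
    exact hRu.star_left_conjugate_le_conjugate_iff

theorem PosDef.le_smul_iff_forall_mem_spectrum_inv_mul_le {M N : Matrix ι ι ℝ} (hM : M.PosDef)
    (hN : N.IsHermitian) (μ : ℝ) :
    N ≤ μ • M ↔ ∀ ν ∈ spectrum ℝ (M⁻¹ * N), ν ≤ μ := by
  obtain ⟨H, hH, hspec, hle⟩ := hM.exists_isHermitian_spectrum_inv_mul_eq hN
  rw [hle, hspec, le_algebraMap_iff_spectrum_le hH]

theorem PosDef.spectrum_inv_mul_nonempty [Nonempty ι] {M N : Matrix ι ι ℝ} (hM : M.PosDef)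
    (hN : N.IsHermitian) : (spectrum ℝ (M⁻¹ * N)).Nonempty := by
  obtain ⟨H, hH, hspec, -⟩ := hM.exists_isHermitian_spectrum_inv_mul_eq hN
  rw [hspec, hH.spectrum_real_eq_range_eigenvalues]
  exact Set.range_nonempty _

theorem add_le_exp_mul_smul_add {X Y A : Matrix ι ι ℝ} {α l t : ℝ} (hα : 0 ≤ α) (hl : 0 ≤ l)
    (ht : 0 ≤ t) (hXα : X ≤ α • 1) (hlA : l • 1 ≤ A) (hXY : X ≤ exp t • Y) :
    X + A ≤ exp (α / (α + l) * t) • (Y + A) := by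
  set c := α / (α + l)
  have hc1 : c ≤ 1 := div_le_one_of_le₀ (by linarith) (by linarith)
  have hct : c * t ≤ t := mul_le_of_le_one_left ht hc1
  set e := exp (-(c * t))
  have hct0 : 0 ≤ c * t := mul_nonneg (div_nonneg hα (add_nonneg hα hl)) ht
  have he1 : e ≤ 1 := exp_le_one_iff.2 (neg_nonpos.2 hct0)
  have hef : exp (-t) ≤ e := exp_le_exp.2 (by linarith)
  have hY : 0 ≤ Y - exp (-t) • X := by
    have := smul_nonneg (exp_nonneg (-t)) (sub_nonneg.2 hXY)
    rwa [smul_sub, smul_smul, ← exp_add, neg_add_cancel, exp_zero, one_smul] at this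
  have hsum : 0 ≤ (Y + A) - e • (X + A) := by
    have := add_nonneg (add_nonneg (add_nonneg hY
      (smul_nonneg (sub_nonneg.2 hef) (sub_nonneg.2 hXα)))
      (smul_nonneg (sub_nonneg.2 he1) (sub_nonneg.2 hlA)))
      (smul_nonneg (sub_nonneg.2 (exp_neg_mul_sub_mul_le hα hl ht)) zero_le_one)
    convert this using 1
    module
  have := smul_nonneg (exp_nonneg (c * t)) hsum
  rwa [smul_sub, smul_smul, ← exp_add, add_neg_cancel, exp_zero, one_smul, sub_nonneg] at this

end Matrix

open Matrix

theorem maxEig_inv_mul_le_iff [NeZero n] {M N : Matrix (Fin n) (Fin n) ℝ} (hM : M.PosDef)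
    (hN : N.IsHermitian) (μ : ℝ) : maxEig (M⁻¹ * N) ≤ μ ↔ N ≤ μ • M := by
  rw [maxEig, csSup_le_iff finite_real_spectrum.bddAbove (hM.spectrum_inv_mul_nonempty hN),
    hM.le_smul_iff_forall_mem_spectrum_inv_mul_le hN]

theorem maxEig_inv_mul_pos [NeZero n] {M N : Matrix (Fin n) (Fin n) ℝ} (hM : M.PosDef)
    (hN : N.PosDef) : 0 < maxEig (M⁻¹ * N) :=
  hN.pos_of_le_smul hM.posSemidef ((maxEig_inv_mul_le_iff hM hN.1 _).1 le_rfl)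

theorem deltaT_le_iff [NeZero n] {M N : Matrix (Fin n) (Fin n) ℝ} (hM : M.PosDef)
    (hN : N.PosDef) (s : ℝ) : deltaT M N ≤ s ↔ N ≤ exp s • M ∧ M ≤ exp s • N := by
  rw [deltaT, max_le_iff, log_le_iff_le_exp (maxEig_inv_mul_pos hM hN),
    log_le_iff_le_exp (maxEig_inv_mul_pos hN hM), maxEig_inv_mul_le_iff hM hN.1,
    maxEig_inv_mul_le_iff hN hM.1]

theorem deltaT_nonneg [NeZero n] {M N : Matrix (Fin n) (Fin n) ℝ} (hM : M.PosDef)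
    (hN : N.PosDef) : 0 ≤ deltaT M N := by
  by_contra! hneg
  obtain ⟨hNM, hMN⟩ := (deltaT_le_iff hM hN _).1 le_rfl
  have h1 := trace_le_trace_of_le hNM
  have h2 := trace_le_trace_of_le hMN
  rw [trace_smul, smul_eq_mul] at h1 h2
  have he : exp (deltaT M N) < 1 := exp_lt_one_iff.2 hneg
  nlinarith [hM.trace_pos, hN.trace_pos]

theorem deltaT_fin_zero (X Y : Matrix (Fin 0) (Fin 0) ℝ) : deltaT X Y = 0 := by
  simp [deltaT, maxEig, spectrum.of_subsingleton]

theorem Matrix.IsHermitian.le_smul_one_of_sNorm_le [NeZero n] {X : Matrix (Fin n) (Fin n) ℝ}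
    (hX : X.IsHermitian) {α : ℝ} (h : sNorm X ≤ α) : X ≤ α • 1 := by
  rw [← Algebra.algebraMap_eq_smul_one, le_algebraMap_iff_spectrum_le hX]
  intro ν hν
  rw [← AlgEquiv.spectrum_eq (toEuclideanCLM (𝕜 := ℝ))] at hν
  exact (le_abs_self ν).trans ((spectrum.norm_le_norm_of_mem hν).trans h)

theorem minEig_smul_one_le {A : Matrix (Fin n) (Fin n) ℝ} (hA : A.IsHermitian) :
    minEig A • 1 ≤ A := by
  rw [← Algebra.algebraMap_eq_smul_one, algebraMap_le_iff_le_spectrum hA]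
  exact fun ν hν => csInf_le finite_real_spectrum.bddBelow hν

theorem minEig_nonneg {A : Matrix (Fin n) (Fin n) ℝ} (hA : A.PosSemidef) : 0 ≤ minEig A :=
  Real.sInf_nonneg fun _ hν => spectrum_nonneg_of_nonneg hA.nonneg hν

theorem stmt4 (A X Y : Matrix (Fin n) (Fin n) ℝ)
    (hA : A.PosDef) (hX : X.PosDef) (hY : Y.PosDef) :
    deltaT (X + A) (Y + A) ≤
      (max (sNorm X) (sNorm Y) / (max (sNorm X) (sNorm Y) + minEig A)) * deltaT X Y := by
  obtain _ | n := n
  · simp [deltaT_fin_zero]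
  set α := max (sNorm X) (sNorm Y)
  have hα : 0 ≤ α := (norm_nonneg _).trans (le_max_left _ _)
  have hl := minEig_nonneg hA.posSemidef
  have ht := deltaT_nonneg hX hY
  obtain ⟨hXY, hYX⟩ := (deltaT_le_iff hX hY _).1 le_rfl
  have hXα : X ≤ α • 1 := hX.isHermitian.le_smul_one_of_sNorm_le (le_max_left _ _)
  have hYα : Y ≤ α • 1 := hY.isHermitian.le_smul_one_of_sNorm_le (le_max_right _ _)
  have hAl := minEig_smul_one_le hA.isHermitian
  exact (deltaT_le_iff (hX.add hA) (hY.add hA) _).2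
    ⟨add_le_exp_mul_smul_add hα hl ht hYα hAl hXY, add_le_exp_mul_smul_add hα hl ht hXα hAl hYX⟩
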